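/- Define g : [0,1] → [0,1] by g(y) = 2y for 0 ≤ y < 1/2 and g(y) = 2(1 − y) for 1/2 ≤ y ≤ 1, and let g_l denote the l-fold composition of g with itself. Then for every positive integer L, the function f(x) = |x| − Σ_{l=1}^{L−1} 4^{−l} g_l(|x|), restricted to x ∈ [−1,1] and extended to ℝ by the same network formulas, belongs to the neural-net class F_{L,2}(ℝ); explicitly, with hidden variables y_{1,1} = ReLU(x), y_{1,2} = ReLU(−x), y_{2,1} = ReLU(y_{1,1} + y_{1,2}), y_{2,2} = ReLU(y_{1,1} + y_{1,2} − 1/2), y_{l+1,1} = ReLU(2y_{l,1} − 4y_{l,2}), y_{l+1,2} = ReLU(2y_{l,1} − 4y_{l,2} − 1/2) for l = 2,…,L−1, one has |x| = y_{1,1} + y_{1,2} and g_l(|x|) = 2y_{l+1,1} − 4y_{l+1,2} for all x ∈ [−1,1] and l = 1,…,L−1. -/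

import Mathlib

noncomputable section

/-- `f : ℝ^d → ℝ` belongs to the neural-net class `F_{L,M}(ℝ^d)`. -/
def NNClass (d L M : ℕ) (f : (Fin d → ℝ) → ℝ) : Prop :=
  ∃ y : Fin L → Fin M → (Fin d → ℝ) → ℝ,
    (∀ (h0 : 0 < L) (m : Fin M), ∃ (w : Fin d → ℝ) (b : ℝ),
      ∀ x, y ⟨0, h0⟩ m x = max (b + ∑ i, w i * x i) 0) ∧
    (∀ (l : ℕ) (hl : l + 1 < L) (m : Fin M),
      ∃ (w : Fin d → ℝ) (v : Fin M → ℝ) (b : ℝ),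
      ∀ x, y ⟨l + 1, hl⟩ m x =
        max (b + ∑ i, w i * x i + ∑ j, v j * y ⟨l, Nat.lt_of_succ_lt hl⟩ j x) 0) ∧
    (∃ (w : Fin d → ℝ) (c : Fin L → Fin M → ℝ) (b : ℝ),
      ∀ x, f x = b + ∑ i, w i * x i + ∑ l, ∑ m, c l m * y l m x)

/-- The tent map `g(y) = 2y` for `y < 1/2`, `g(y) = 2(1−y)` for `y ≥ 1/2`. -/
def tent (y : ℝ) : ℝ := if y < 1 / 2 then 2 * y else 2 * (1 - y)

/-- The hidden variables of the network computing the square function: `Y l` is the pair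
`(y_{l+1,1}, y_{l+1,2})`, with `y_{1,1} = ReLU(x)`, `y_{1,2} = ReLU(−x)`,
`y_{2,1} = ReLU(y_{1,1} + y_{1,2})`, `y_{2,2} = ReLU(y_{1,1} + y_{1,2} − 1/2)`, and
`y_{l+1,1} = ReLU(2y_{l,1} − 4y_{l,2})`, `y_{l+1,2} = ReLU(2y_{l,1} − 4y_{l,2} − 1/2)`. -/
def Y : ℕ → ℝ → ℝ × ℝ
  | 0, x => (max x 0, max (-x) 0)
  | 1, x => (max ((Y 0 x).1 + (Y 0 x).2) 0, max ((Y 0 x).1 + (Y 0 x).2 - 1 / 2) 0)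
  | l + 2, x => (max (2 * (Y (l + 1) x).1 - 4 * (Y (l + 1) x).2) 0,
                 max (2 * (Y (l + 1) x).1 - 4 * (Y (l + 1) x).2 - 1 / 2) 0)

/-!
On `[0, 1]` the tent map is `g y = 2 y - 4 ReLU (y - 1/2)` and preserves `[0, 1]`, so the two
neurons `ReLU z`, `ReLU (z - 1/2)` of each layer feed `g` of the previous layer's output to the
next one, and `2 y_{l+1,1} - 4 y_{l+1,2} = g_l(|x|)` for `|x| ≤ 1`. For `|x| ≥ 1` the layers
beyond the second vanish, while `g_l(|x|) = 2^(l-1) g(|x|)` is affine in `|x|`; the second-layer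
neuron `ReLU (g(|x|))` supplies the missing term. Hence every `g_l(|x|)` with `l < L`, and so
`f`, is a linear combination of the neurons.
-/

open Set

theorem NNClass.of_mem_span {d L M : ℕ} {f : (Fin d → ℝ) → ℝ}
    (y : ℕ → Fin M → (Fin d → ℝ) → ℝ)
    (hfirst : ∀ m, ∃ (w : Fin d → ℝ) (b : ℝ),
      ∀ x, y 0 m x = max (b + ∑ i, w i * x i) 0)
    (hnext : ∀ l, l + 1 < L → ∀ m, ∃ (w : Fin d → ℝ) (v : Fin M → ℝ) (b : ℝ),
      ∀ x, y (l + 1) m x = max (b + ∑ i, w i * x i + ∑ j, v j * y l j x) 0)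
    (hf : f ∈ Submodule.span ℝ (range fun p : Fin L × Fin M => y p.1 p.2)) :
    NNClass d L M f := by
  obtain ⟨c, hc⟩ := (Submodule.mem_span_range_iff_exists_fun ℝ).1 hf
  refine ⟨fun l m => y l m, fun _ => hfirst, fun l hl => hnext l hl,
    0, fun l m => c (l, m), 0, fun x => ?_⟩
  simp [← hc, Finset.sum_apply, Fintype.sum_prod_type]

lemma tent_eq (y : ℝ) : tent y = 2 * y - 4 * max (y - 1 / 2) 0 := by
  unfold tent
  split_ifs with h
  · rw [max_eq_right (by linarith)]; ring
  · rw [max_eq_left (by linarith)]; ring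

lemma tent_mapsTo : MapsTo tent (Icc 0 1) (Icc 0 1) := by
  rintro y ⟨h0, h1⟩
  unfold tent
  split_ifs <;> constructor <;> linarith

lemma tent_iterate_succ_of_one_le {u : ℝ} (hu : 1 ≤ u) (l : ℕ) :
    tent^[l + 1] u = 2 ^ l * tent u := by
  have htent : tent u ≤ 0 := by rw [tent, if_neg (by linarith)]; linarith
  induction l with
  | zero => simp
  | succ k ih =>
    have hneg : 2 ^ k * tent u ≤ 0 := mul_nonpos_of_nonneg_of_nonpos (by positivity) htent
    rw [Function.iterate_succ_apply', ih, tent, if_pos (by linarith), pow_succ]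
    ring

lemma Y_zero_fst_add_snd (t : ℝ) : (Y 0 t).1 + (Y 0 t).2 = |t| :=
  max_zero_add_max_neg_zero_eq_abs_self t

lemma Y_one (t : ℝ) : Y 1 t = (|t|, max (|t| - 1 / 2) 0) := by
  rw [Y, Y_zero_fst_add_snd, max_eq_left (abs_nonneg t)]

lemma Y_add_two (l : ℕ) (t : ℝ) : Y (l + 2) t =
    (max (2 * (Y (l + 1) t).1 - 4 * (Y (l + 1) t).2) 0,
      max (2 * (Y (l + 1) t).1 - 4 * (Y (l + 1) t).2 - 1 / 2) 0) := rfl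

lemma Y_succ_of_abs_le_one {t : ℝ} (ht : |t| ≤ 1) (l : ℕ) :
    Y (l + 1) t = (tent^[l] |t|, max (tent^[l] |t| - 1 / 2) 0) := by
  induction l with
  | zero => exact Y_one t
  | succ k ih =>
    have hmem := tent_mapsTo.iterate (k + 1) ⟨abs_nonneg t, ht⟩
    rw [Y_add_two, ih, ← tent_eq, ← Function.iterate_succ_apply' tent, max_eq_left hmem.1]

lemma tent_iterate_succ_abs_of_abs_le_one {t : ℝ} (ht : |t| ≤ 1) (l : ℕ) :
    tent^[l + 1] |t| = 2 * (Y (l + 1) t).1 - 4 * (Y (l + 1) t).2 := by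
  rw [Y_succ_of_abs_le_one ht, Function.iterate_succ_apply', tent_eq]

lemma Y_add_two_of_one_le_abs {t : ℝ} (ht : 1 ≤ |t|) (l : ℕ) : Y (l + 2) t = (0, 0) := by
  induction l with
  | zero =>
    rw [Y_add_two, Y_one, max_eq_left (by linarith : (0 : ℝ) ≤ |t| - 1 / 2)]
    simp only [Prod.mk.injEq]
    constructor <;> apply max_eq_right <;> linarith
  | succ k ih =>
    rw [Y_add_two, ih]
    norm_num

lemma tent_abs (t : ℝ) : tent |t| = 2 * (Y 1 t).1 - 4 * (Y 1 t).2 := by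
  rw [Y_one, tent_eq]

/-- The correction `(Y 2 t).1 - tent |t| = ReLU (-tent |t|)` vanishes for `|t| ≤ 1`;
for `|t| ≥ 1` it is `-tent |t|`, while the layers past the second vanish. -/
lemma tent_iterate_add_two_abs (t : ℝ) (k : ℕ) :
    tent^[k + 2] |t| =
      2 * (Y (k + 2) t).1 - 4 * (Y (k + 2) t).2 - 2 ^ (k + 1) * ((Y 2 t).1 - tent |t|) := by
  rcases le_total |t| 1 with ht | ht
  · have hY2 : (Y 2 t).1 = tent |t| := by rw [Y_succ_of_abs_le_one ht 1]; rfl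
    rw [hY2, ← tent_iterate_succ_abs_of_abs_le_one ht (k + 1)]
    ring
  · rw [tent_iterate_succ_of_one_le ht, Y_add_two_of_one_le_abs ht,
      Y_add_two_of_one_le_abs ht 0]
    ring

def squareNeuron (l : ℕ) (m : Fin 2) (x : Fin 1 → ℝ) : ℝ :=
  ![(Y l (x 0)).1, (Y l (x 0)).2] m

lemma squareNeuron_zero (m : Fin 2) :
    ∃ (w : Fin 1 → ℝ) (b : ℝ), ∀ x,
      squareNeuron 0 m x = max (b + ∑ i, w i * x i) 0 := by
  fin_cases m
  · exact ⟨fun _ => 1, 0, fun x => by simp [squareNeuron, Y]⟩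
  · exact ⟨fun _ => -1, 0, fun x => by simp [squareNeuron, Y]⟩

lemma squareNeuron_succ (l : ℕ) (m : Fin 2) :
    ∃ (w : Fin 1 → ℝ) (v : Fin 2 → ℝ) (b : ℝ), ∀ x, squareNeuron (l + 1) m x =
      max (b + ∑ i, w i * x i + ∑ j, v j * squareNeuron l j x) 0 := by
  rcases l with _ | l <;> fin_cases m
  · exact ⟨0, ![1, 1], 0, fun x => by simp [squareNeuron, Y]⟩
  · exact ⟨0, ![1, 1], -(1 / 2), fun x => by simp [squareNeuron, Y]; ring_nf⟩
  · exact ⟨0, ![2, -4], 0, fun x => by simp [squareNeuron, Y_add_two]; ring_nf⟩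
  · exact ⟨0, ![2, -4], -(1 / 2), fun x => by simp [squareNeuron, Y_add_two]; ring_nf⟩

section span

def squareNeuronSpan (L : ℕ) : Submodule ℝ ((Fin 1 → ℝ) → ℝ) :=
  Submodule.span ℝ (range fun p : Fin L × Fin 2 => squareNeuron p.1 p.2)

variable {L : ℕ}

lemma squareNeuron_mem_span {l : ℕ} (hl : l < L) (m : Fin 2) :
    squareNeuron l m ∈ squareNeuronSpan L :=
  Submodule.subset_span ⟨(⟨l, hl⟩, m), rfl⟩

lemma abs_mem_span (hL : 0 < L) : (fun x : Fin 1 → ℝ => |x 0|) ∈ squareNeuronSpan L := by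
  have : (fun x : Fin 1 → ℝ => |x 0|) = squareNeuron 0 0 + squareNeuron 0 1 := by
    funext x
    simp [squareNeuron, ← Y_zero_fst_add_snd]
  rw [this]
  exact add_mem (squareNeuron_mem_span hL 0) (squareNeuron_mem_span hL 1)

lemma layerOutput_mem_span {l : ℕ} (hl : l < L) :
    (fun x : Fin 1 → ℝ => 2 * (Y l (x 0)).1 - 4 * (Y l (x 0)).2) ∈ squareNeuronSpan L := by
  have : (fun x : Fin 1 → ℝ => 2 * (Y l (x 0)).1 - 4 * (Y l (x 0)).2) =
      (2 : ℝ) • squareNeuron l 0 - (4 : ℝ) • squareNeuron l 1 := by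
    funext x
    simp [squareNeuron]
  rw [this]
  exact sub_mem (Submodule.smul_mem _ _ (squareNeuron_mem_span hl 0))
    (Submodule.smul_mem _ _ (squareNeuron_mem_span hl 1))

lemma tent_iterate_abs_mem_span {l : ℕ} (hl : 1 ≤ l) (hlL : l < L) :
    (fun x : Fin 1 → ℝ => tent^[l] |x 0|) ∈ squareNeuronSpan L := by
  obtain rfl | ⟨k, rfl⟩ : l = 1 ∨ ∃ k, l = k + 2 := by
    rcases l with _ | _ | k <;> simp_all
  · simp only [Function.iterate_one, tent_abs]
    exact layerOutput_mem_span hlL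
  · have hsplit : (fun x : Fin 1 → ℝ => tent^[k + 2] |x 0|) =
        (fun x => 2 * (Y (k + 2) (x 0)).1 - 4 * (Y (k + 2) (x 0)).2) - (2 : ℝ) ^ (k + 1) •
          (squareNeuron 2 0 - fun x => 2 * (Y 1 (x 0)).1 - 4 * (Y 1 (x 0)).2) := by
      funext x
      simp [tent_iterate_add_two_abs, squareNeuron, tent_abs]
    rw [hsplit]
    exact sub_mem (layerOutput_mem_span hlL) (Submodule.smul_mem _ _
      (sub_mem (squareNeuron_mem_span (by omega) 0) (layerOutput_mem_span (by omega))))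

lemma squareApprox_mem_span (hL : 0 < L) :
    (fun x : Fin 1 → ℝ =>
      |x 0| - ∑ l ∈ Finset.Icc 1 (L - 1), (4 : ℝ) ^ (-(l : ℤ)) * tent^[l] |x 0|) ∈
      squareNeuronSpan L := by
  have hf : (fun x : Fin 1 → ℝ =>
        |x 0| - ∑ l ∈ Finset.Icc 1 (L - 1), (4 : ℝ) ^ (-(l : ℤ)) * tent^[l] |x 0|) =
      (fun x => |x 0|) - ∑ l ∈ Finset.Icc 1 (L - 1),
        (4 : ℝ) ^ (-(l : ℤ)) • fun x : Fin 1 → ℝ => tent^[l] |x 0| := by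
    funext x
    simp [Finset.sum_apply]
  rw [hf]
  refine sub_mem (abs_mem_span hL) (Submodule.sum_mem _ fun l hl => Submodule.smul_mem _ _ ?_)
  rw [Finset.mem_Icc] at hl
  exact tent_iterate_abs_mem_span hl.1 (by omega)

end span

/-- For every `L ≥ 1`, the function `f(x) = |x| − Σ_{l=1}^{L−1} 4^{−l} g_l(|x|)` belongs
to the neural-net class `F_{L,2}(ℝ)`, and the explicit hidden variables `Y` satisfy
`|x| = y_{1,1} + y_{1,2}` and `g_l(|x|) = 2y_{l+1,1} − 4y_{l+1,2}` for all `x ∈ [−1,1]`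
and `l = 1,…,L−1` (here `Y l = (y_{l+1,1}, y_{l+1,2})` and `g_l` is the `l`-fold
iterate of the tent map). -/
theorem square_network (L : ℕ) (hL : 0 < L) :
    NNClass 1 L 2
        (fun x => |x 0| - ∑ l ∈ Finset.Icc 1 (L - 1), (4 : ℝ) ^ (-(l : ℤ)) * tent^[l] |x 0|) ∧
      ∀ x ∈ Set.Icc (-1 : ℝ) 1,
        |x| = (Y 0 x).1 + (Y 0 x).2 ∧
        ∀ l : ℕ, 1 ≤ l → l ≤ L - 1 → tent^[l] |x| = 2 * (Y l x).1 - 4 * (Y l x).2 := by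
  refine ⟨NNClass.of_mem_span squareNeuron squareNeuron_zero (fun l _ => squareNeuron_succ l)
    (squareApprox_mem_span hL), fun x hx => ⟨(Y_zero_fst_add_snd x).symm, fun l hl hlL => ?_⟩⟩
  obtain ⟨k, rfl⟩ : ∃ k, l = k + 1 := ⟨l - 1, by omega⟩
  exact tent_iterate_succ_abs_of_abs_le_one (abs_le.2 hx) k
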